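/- arXiv:1810.09192 — 6 statements merged into one kernel-verified Lean document; each statement's English description precedes it below -/
import Mathlib

section
/- Let T⁰ and T¹ be real-valued random variables with T¹ ≥ T⁰ almost surely, and fix t > 0 with P(T⁰ ≥ t) > 0 and P(T⁰ < t, T¹ ≥ t) > 0; set π(t) = P(T⁰ ≥ t)/P(T¹ ≥ t). Suppose the following limits as h → 0⁺ exist: λ₁(t) = lim h⁻¹ P(t ≤ T¹ < t+h | T¹ ≥ t), λ₀(t) = lim h⁻¹ P(t ≤ T⁰ < t+h | T⁰ ≥ t), a(t) = lim h⁻¹ P(t ≤ T¹ < t+h | T⁰ ≥ t, T¹ ≥ t), b(t) = lim h⁻¹ P(t ≤ T⁰ < t+h | T⁰ ≥ t, T¹ ≥ t), c(t) = lim h⁻¹ P(t ≤ T¹ < t+h | T⁰ < t, T¹ ≥ t), with a(t) > 0 and b(t) > 0. Define HR(t) = a(t)/b(t) and SR(t) = c(t)/a(t). Then λ₁(t)/λ₀(t) = HR(t) · [π(t) + SR(t)(1 − π(t))]. -/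
open MeasureTheory ProbabilityTheory Filter Set

/-!
Under monotonicity the set `{T⁰ ≥ t}` is almost surely the stratum `{T⁰ ≥ t, T¹ ≥ t}`, so
`λ₀ = b`. The risk set `{T¹ ≥ t}` splits into the two strata `{T⁰ ≥ t, T¹ ≥ t}` and
`{T⁰ < t, T¹ ≥ t}` with weights `π` and `1 - π`, and the law of total probability passes to the
limit: `λ₁ = π a + (1 - π) c`. Dividing gives the identity.
-/

namespace ProbabilityTheory

variable {Ω : Type*} [MeasurableSpace Ω] {μ : Measure Ω} {s s' A B : Set Ω}

theorem cond_congr_ae (h : s =ᵐ[μ] s') : μ[|s] = μ[|s'] := by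
  simp only [cond, measure_congr h, Measure.restrict_congr_set h]

variable [IsFiniteMeasure μ]

theorem measureReal_mul_cond (hs : MeasurableSet s) (t : Set Ω) :
    μ.real s * (μ[|s] t).toReal = μ.real (s ∩ t) := by
  rw [mul_comm, measureReal_def, ← ENNReal.toReal_mul, cond_mul_eq_inter hs, measureReal_def]

theorem measureReal_mul_cond_eq_add (hA : MeasurableSet A) (hB : MeasurableSet B) (E : Set Ω) :
    μ.real B * (μ[|B] E).toReal =
      μ.real (A ∩ B) * (μ[|A ∩ B] E).toReal + μ.real (Aᶜ ∩ B) * (μ[|Aᶜ ∩ B] E).toReal := by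
  rw [measureReal_mul_cond hB, measureReal_mul_cond (hA.inter hB),
    measureReal_mul_cond (hA.compl.inter hB), ← measureReal_inter_add_sdiff (s := B ∩ E) hA]
  congr 2 <;> ext ω <;> simp only [mem_inter_iff, Set.mem_sdiff, mem_compl_iff] <;> tauto

theorem tendsto_cond_div_of_mixture {ι : Type*} {l : Filter ι} (hA : MeasurableSet A)
    (hB : MeasurableSet B) (hB0 : μ B ≠ 0) {E : ι → Set Ω} {r : ι → ℝ} {a c : ℝ}
    (ha : Tendsto (fun i => (μ[|A ∩ B] (E i)).toReal / r i) l (nhds a))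
    (hc : Tendsto (fun i => (μ[|Aᶜ ∩ B] (E i)).toReal / r i) l (nhds c)) :
    Tendsto (fun i => (μ[|B] (E i)).toReal / r i) l
      (nhds ((μ.real (A ∩ B) * a + μ.real (Aᶜ ∩ B) * c) / μ.real B)) := by
  have hy : μ.real B ≠ 0 := (measureReal_ne_zero_iff).2 hB0
  convert ((ha.const_mul _).add (hc.const_mul _)).div_const (μ.real B) using 2 with i
  rw [mul_div_assoc', mul_div_assoc', ← add_div, ← measureReal_mul_cond_eq_add hA hB,
    mul_div_assoc, mul_div_cancel_left₀ _ hy]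

end ProbabilityTheory

open ProbabilityTheory in
theorem stmt8_general {Ω : Type*} [MeasurableSpace Ω] (μ : Measure Ω) [IsProbabilityMeasure μ]
    (T0 T1 : Ω → ℝ) (hT0 : Measurable T0) (hT1 : Measurable T1)
    (hmono : ∀ᵐ ω ∂μ, T0 ω ≤ T1 ω)
    (t : ℝ)
    (hpos2 : μ ({ω | T0 ω < t} ∩ {ω | t ≤ T1 ω}) ≠ 0)
    (π : ℝ) (hπ : π = (μ {ω | t ≤ T0 ω}).toReal / (μ {ω | t ≤ T1 ω}).toReal)
    (lam1 lam0 a b c : ℝ)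
    (hlam1 : Tendsto (fun h : ℝ =>
        (μ[|{ω | t ≤ T1 ω}] {ω | t ≤ T1 ω ∧ T1 ω < t + h}).toReal / h)
      (nhdsWithin 0 (Ioi 0)) (nhds lam1))
    (hlam0 : Tendsto (fun h : ℝ =>
        (μ[|{ω | t ≤ T0 ω}] {ω | t ≤ T0 ω ∧ T0 ω < t + h}).toReal / h)
      (nhdsWithin 0 (Ioi 0)) (nhds lam0))
    (ha : Tendsto (fun h : ℝ =>
        (μ[|{ω | t ≤ T0 ω} ∩ {ω | t ≤ T1 ω}] {ω | t ≤ T1 ω ∧ T1 ω < t + h}).toReal / h)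
      (nhdsWithin 0 (Ioi 0)) (nhds a))
    (hb : Tendsto (fun h : ℝ =>
        (μ[|{ω | t ≤ T0 ω} ∩ {ω | t ≤ T1 ω}] {ω | t ≤ T0 ω ∧ T0 ω < t + h}).toReal / h)
      (nhdsWithin 0 (Ioi 0)) (nhds b))
    (hc : Tendsto (fun h : ℝ =>
        (μ[|{ω | T0 ω < t} ∩ {ω | t ≤ T1 ω}] {ω | t ≤ T1 ω ∧ T1 ω < t + h}).toReal / h)
      (nhdsWithin 0 (Ioi 0)) (nhds c))
    (hapos : 0 < a) :
    lam1 / lam0 = (a / b) * (π + (c / a) * (1 - π)) := by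
  set A := {ω | t ≤ T0 ω}
  set B := {ω | t ≤ T1 ω}
  have hA : MeasurableSet A := hT0 measurableSet_Ici
  have hB : MeasurableSet B := hT1 measurableSet_Ici
  have hAc : {ω | T0 ω < t} = Aᶜ := by ext ω; simp [A]
  rw [hAc] at hpos2 hc
  have hAB : A =ᵐ[μ] (A ∩ B : Set Ω) := by
    rw [eventuallyEq_set]
    exact hmono.mono fun ω hω => ⟨fun h => ⟨h, h.trans hω⟩, And.left⟩
  have hlam0b : lam0 = b := tendsto_nhds_unique hlam0 (by rwa [← cond_congr_ae hAB] at hb)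
  have hlam1 : lam1 = (μ.real A * a + μ.real (Aᶜ ∩ B) * c) / μ.real B := by
    refine tendsto_nhds_unique hlam1 ?_
    simpa only [← measureReal_congr hAB] using tendsto_cond_div_of_mixture hA hB
      (fun h => hpos2 (measure_mono_null inter_subset_right h)) ha hc
  have hy : μ.real B = μ.real A + μ.real (Aᶜ ∩ B) := by
    rw [← measureReal_inter_add_sdiff (s := B) hA, inter_comm, ← measureReal_congr hAB, sdiff_eq,
      inter_comm]
  have hd : 0 < μ.real (Aᶜ ∩ B) := ENNReal.toReal_pos hpos2 (measure_ne_top _ _)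
  rw [← measureReal_def, ← measureReal_def] at hπ
  rw [hlam0b, hlam1, hπ, hy]
  field_simp
  ring

/-- The sensitivity identity (7) of the paper. Under monotonicity
`T¹ ≥ T⁰` a.s., with `π(t) = P(T⁰ ≥ t)/P(T¹ ≥ t)` and existing hazard limits
`λ₁(t), λ₀(t), a(t), b(t), c(t)` (with `a(t), b(t) > 0`), setting `HR(t) = a(t)/b(t)`
and `SR(t) = c(t)/a(t)`, one has `λ₁(t)/λ₀(t) = HR(t)·[π(t) + SR(t)(1 − π(t))]`. -/
theorem stmt8 {Ω : Type*} [MeasurableSpace Ω] (μ : Measure Ω) [IsProbabilityMeasure μ]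
    (T0 T1 : Ω → ℝ) (hT0 : Measurable T0) (hT1 : Measurable T1)
    (hmono : ∀ᵐ ω ∂μ, T0 ω ≤ T1 ω)
    (t : ℝ) (ht : 0 < t)
    (hpos0 : μ {ω | t ≤ T0 ω} ≠ 0)
    (hpos2 : μ ({ω | T0 ω < t} ∩ {ω | t ≤ T1 ω}) ≠ 0)
    (π : ℝ) (hπ : π = (μ {ω | t ≤ T0 ω}).toReal / (μ {ω | t ≤ T1 ω}).toReal)
    (lam1 lam0 a b c : ℝ)
    (hlam1 : Tendsto (fun h : ℝ =>
        (μ[|{ω | t ≤ T1 ω}] {ω | t ≤ T1 ω ∧ T1 ω < t + h}).toReal / h)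
      (nhdsWithin 0 (Ioi 0)) (nhds lam1))
    (hlam0 : Tendsto (fun h : ℝ =>
        (μ[|{ω | t ≤ T0 ω}] {ω | t ≤ T0 ω ∧ T0 ω < t + h}).toReal / h)
      (nhdsWithin 0 (Ioi 0)) (nhds lam0))
    (ha : Tendsto (fun h : ℝ =>
        (μ[|{ω | t ≤ T0 ω} ∩ {ω | t ≤ T1 ω}] {ω | t ≤ T1 ω ∧ T1 ω < t + h}).toReal / h)
      (nhdsWithin 0 (Ioi 0)) (nhds a))
    (hb : Tendsto (fun h : ℝ =>
        (μ[|{ω | t ≤ T0 ω} ∩ {ω | t ≤ T1 ω}] {ω | t ≤ T0 ω ∧ T0 ω < t + h}).toReal / h)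
      (nhdsWithin 0 (Ioi 0)) (nhds b))
    (hc : Tendsto (fun h : ℝ =>
        (μ[|{ω | T0 ω < t} ∩ {ω | t ≤ T1 ω}] {ω | t ≤ T1 ω ∧ T1 ω < t + h}).toReal / h)
      (nhdsWithin 0 (Ioi 0)) (nhds c))
    (hapos : 0 < a) (hbpos : 0 < b) :
    lam1 / lam0 = (a / b) * (π + (c / a) * (1 - π)) :=
  stmt8_general μ T0 T1 hT0 hT1 hmono t hpos2 π hπ lam1 lam0 a b c hlam1 hlam0 ha hb hc hapos
end

section
/- Under the setup of the sensitivity identity — T¹ ≥ T⁰ almost surely, the limits λ₁(t), λ₀(t), a(t), b(t), c(t) exist with a(t) > 0, b(t) > 0, λ₀(t) > 0, and λ₁(t)/λ₀(t) = HR(t)[π(t) + SR(t)(1 − π(t))] with HR(t) = a(t)/b(t), SR(t) = c(t)/a(t), π(t) = P(T⁰ ≥ t)/P(T¹ ≥ t) ∈ [0, 1] — if additionally SR(t) ≥ 1, then HR(t) ≤ λ₁(t)/λ₀(t). In particular, when the observed hazard ratio λ₁(t)/λ₀(t) is constant, e.g. equal to 0.8, the causal hazard ratio satisfies HR(t) ≤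 0.8 for all such t. -/
open MeasureTheory ProbabilityTheory Filter Set

theorem one_le_add_mul_one_sub {α : Type*} [CommRing α] [PartialOrder α] [IsOrderedRing α]
    {p s : α} (hp : p ≤ 1) (hs : 1 ≤ s) : 1 ≤ p + s * (1 - p) := by
  have hmix : p + s * (1 - p) - 1 = (s - 1) * (1 - p) := by ring
  exact sub_nonneg.1 (hmix ▸ mul_nonneg (sub_nonneg.2 hs) (sub_nonneg.2 hp))

theorem stmt9_general
    (π : ℝ)
    (lam1 lam0 a b c : ℝ)
    (hapos : 0 < a) (hbpos : 0 < b)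
    (hπmem : 0 ≤ π ∧ π ≤ 1)
    (hidentity : lam1 / lam0 = (a / b) * (π + (c / a) * (1 - π)))
    (hSR : 1 ≤ c / a) :
    a / b ≤ lam1 / lam0 ∧ (lam1 / lam0 = 0.8 → a / b ≤ 0.8) := by
  have key : a / b ≤ lam1 / lam0 :=
    hidentity ▸ le_mul_of_one_le_right (div_pos hapos hbpos).le
      (one_le_add_mul_one_sub hπmem.2 hSR)
  exact ⟨key, fun h => h ▸ key⟩

/-- Under the setup of the sensitivity identity — `T¹ ≥ T⁰` a.s., existing
hazard limits with `a(t) > 0`, `b(t) > 0`, `λ₀(t) > 0`, `π(t) = P(T⁰ ≥ t)/P(T¹ ≥ t)`, and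
`λ₁(t)/λ₀(t) = HR(t)[π(t) + SR(t)(1 − π(t))]` with `HR(t) = a/b`, `SR(t) = c/a` — if
additionally `SR(t) ≥ 1` then `HR(t) ≤ λ₁(t)/λ₀(t)`; in particular if the observed hazard
ratio equals `0.8` then `HR(t) ≤ 0.8`. -/
theorem stmt9 {Ω : Type*} [MeasurableSpace Ω] (μ : Measure Ω) [IsProbabilityMeasure μ]
    (T0 T1 : Ω → ℝ) (hT0 : Measurable T0) (hT1 : Measurable T1)
    (hmono : ∀ᵐ ω ∂μ, T0 ω ≤ T1 ω)
    (t : ℝ) (ht : 0 < t)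
    (hpos0 : μ {ω | t ≤ T0 ω} ≠ 0)
    (hpos2 : μ ({ω | T0 ω < t} ∩ {ω | t ≤ T1 ω}) ≠ 0)
    (π : ℝ) (hπ : π = (μ {ω | t ≤ T0 ω}).toReal / (μ {ω | t ≤ T1 ω}).toReal)
    (lam1 lam0 a b c : ℝ)
    (hlam1 : Tendsto (fun h : ℝ =>
        (μ[|{ω | t ≤ T1 ω}] {ω | t ≤ T1 ω ∧ T1 ω < t + h}).toReal / h)
      (nhdsWithin 0 (Ioi 0)) (nhds lam1))
    (hlam0 : Tendsto (fun h : ℝ =>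
        (μ[|{ω | t ≤ T0 ω}] {ω | t ≤ T0 ω ∧ T0 ω < t + h}).toReal / h)
      (nhdsWithin 0 (Ioi 0)) (nhds lam0))
    (ha : Tendsto (fun h : ℝ =>
        (μ[|{ω | t ≤ T0 ω} ∩ {ω | t ≤ T1 ω}] {ω | t ≤ T1 ω ∧ T1 ω < t + h}).toReal / h)
      (nhdsWithin 0 (Ioi 0)) (nhds a))
    (hb : Tendsto (fun h : ℝ =>
        (μ[|{ω | t ≤ T0 ω} ∩ {ω | t ≤ T1 ω}] {ω | t ≤ T0 ω ∧ T0 ω < t + h}).toReal / h)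
      (nhdsWithin 0 (Ioi 0)) (nhds b))
    (hc : Tendsto (fun h : ℝ =>
        (μ[|{ω | T0 ω < t} ∩ {ω | t ≤ T1 ω}] {ω | t ≤ T1 ω ∧ T1 ω < t + h}).toReal / h)
      (nhdsWithin 0 (Ioi 0)) (nhds c))
    (hapos : 0 < a) (hbpos : 0 < b) (hlam0pos : 0 < lam0)
    (hπmem : 0 ≤ π ∧ π ≤ 1)
    (hidentity : lam1 / lam0 = (a / b) * (π + (c / a) * (1 - π)))
    (hSR : 1 ≤ c / a) :
    a / b ≤ lam1 / lam0 ∧ (lam1 / lam0 = 0.8 → a / b ≤ 0.8) :=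
  stmt9_general π lam1 lam0 a b c hapos hbpos hπmem hidentity hSR
end

section
/- Let Z be a random variable with values in a measurable space, let ψ₀(t, a) and ψ₁(t, z) be measurable functions, and define the conditional hazards λ_a(t, z) = exp{ψ₀(t, a) + ψ₁(t, z)} for a ∈ {0, 1} and the joint survival weight W(t, z) = exp(−∫₀ᵗ [λ₀(s, z) + λ₁(s, z)] ds). Assume 0 < E[λ₀(t, Z) W(t, Z)] < ∞ and E[λ₁(t, Z) W(t, Z)] < ∞. Then E[λ₁(t, Z) W(t, Z)] / E[λ₀(t, Z) W(t, Z)] = exp{ψ₀(t, 1) − ψ₀(t, 0)}. That is, if T⁰ ⫫ T¹ | Z and the conditional hazard is multiplicative in (A, Z) (model (9)), the marginal causal hazard ratio HR(t) of the principal stratum {T⁰ ≥ t, T¹ ≥ t} equals the conditional hazard ratio HR_Z(t) = exp{ψ₀(t, 1) − ψ₀(t, 0)}. -/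
open MeasureTheory Real

/- Under a proportional-hazards model the integrand λ₁ W is pointwise the constant multiple
exp(ψ₀(t,1) − ψ₀(t,0)) of λ₀ W, whatever the weight W is, so the constant factors out of the
expectation and the ratio collapses to it. -/

theorem integral_div_integral_of_forall_eq_const_mul {Ω : Type*} [MeasurableSpace Ω]
    {μ : Measure Ω} {f g : Ω → ℝ} (c : ℝ) (hfg : ∀ ω, f ω = c * g ω) (hg : ∫ ω, g ω ∂μ ≠ 0) :
    (∫ ω, f ω ∂μ) / (∫ ω, g ω ∂μ) = c := by
  rw [funext hfg, integral_const_mul, mul_div_cancel_right₀ _ hg]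

theorem exp_add_mul_eq_exp_sub_mul_exp_add_mul (a₀ a₁ b w : ℝ) :
    exp (a₁ + b) * w = exp (a₁ - a₀) * (exp (a₀ + b) * w) := by
  rw [← mul_assoc, ← exp_add]
  ring_nf

theorem stmt10_general {Ω α : Type*} [MeasurableSpace Ω]
    (μ : Measure Ω)
    (Z : Ω → α)
    (ψ₀ : ℝ → ℝ → ℝ) (ψ₁ : ℝ → α → ℝ)
    (lam : ℝ → ℝ → α → ℝ)
    (hlam : ∀ s a z, lam s a z = Real.exp (ψ₀ s a + ψ₁ s z))
    (W : ℝ → α → ℝ)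
    (t : ℝ)
    (hpos : 0 < ∫ ω, lam t 0 (Z ω) * W t (Z ω) ∂μ) :
    (∫ ω, lam t 1 (Z ω) * W t (Z ω) ∂μ) / (∫ ω, lam t 0 (Z ω) * W t (Z ω) ∂μ)
      = Real.exp (ψ₀ t 1 - ψ₀ t 0) := by
  refine integral_div_integral_of_forall_eq_const_mul _ (fun ω => ?_) hpos.ne'
  simp only [hlam]
  exact exp_add_mul_eq_exp_sub_mul_exp_add_mul _ _ _ _

/-- Under the multiplicative hazard model
`λ_a(t,z) = exp{ψ₀(t,a) + ψ₁(t,z)}` with joint survival weight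
`W(t,z) = exp(−∫₀ᵗ [λ₀(s,z) + λ₁(s,z)] ds)`, if `0 < E[λ₀(t,Z)W(t,Z)] < ∞` and
`E[λ₁(t,Z)W(t,Z)] < ∞`, then
`E[λ₁(t,Z)W(t,Z)]/E[λ₀(t,Z)W(t,Z)] = exp{ψ₀(t,1) − ψ₀(t,0)}`: the marginal causal
hazard ratio of the principal stratum equals the conditional hazard ratio `HR_Z(t)`. -/
theorem stmt10 {Ω α : Type*} [MeasurableSpace Ω] [MeasurableSpace α]
    (μ : Measure Ω) [IsProbabilityMeasure μ]
    (Z : Ω → α) (hZ : Measurable Z)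
    (ψ₀ : ℝ → ℝ → ℝ) (ψ₁ : ℝ → α → ℝ)
    (hψ₀ : ∀ a, Measurable (fun s => ψ₀ s a)) (hψ₁ : ∀ s, Measurable (ψ₁ s))
    (lam : ℝ → ℝ → α → ℝ)
    (hlam : ∀ s a z, lam s a z = Real.exp (ψ₀ s a + ψ₁ s z))
    (W : ℝ → α → ℝ)
    (hW : ∀ s z, W s z = Real.exp (-(∫ r in (0:ℝ)..s, (lam r 0 z + lam r 1 z))))
    (t : ℝ)
    (hpos : 0 < ∫ ω, lam t 0 (Z ω) * W t (Z ω) ∂μ)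
    (hint0 : Integrable (fun ω => lam t 0 (Z ω) * W t (Z ω)) μ)
    (hint1 : Integrable (fun ω => lam t 1 (Z ω) * W t (Z ω)) μ) :
    (∫ ω, lam t 1 (Z ω) * W t (Z ω) ∂μ) / (∫ ω, lam t 0 (Z ω) * W t (Z ω) ∂μ)
      = Real.exp (ψ₀ t 1 - ψ₀ t 0) :=
  stmt10_general μ Z ψ₀ ψ₁ lam hlam W t hpos
end

section
/- Let θ > 0 and β ∈ ℝ. Let Z be Gamma-distributed with shape 1/θ and rate 1/θ, and V be Exp(1)-distributed, with Z and V independent. Define T⁰ = (1/θ) log((θ/Z)V + 1) and T¹ = (1/(θ e^β)) log((θ/Z)V + 1). Then for every t ≥ 0, P(T⁰ > t) = e^{−t} and P(T¹ > t) = e^{−e^β t}. In particular the marginal Cox model with hazard ratio e^β is correctly specified: P(T¹ > t) = P(T⁰ > t)^{e^β}. -/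
/-!
Both survival times are functions of `L = log ((θ / Z) V + 1)`, and `T¹ = T⁰ / e^β`, so everything
reduces to `P(L > θ t) = e^{-t}`. Off a null set `Z, V > 0`, and `L > θ t` is the event `V > s Z`
with `s = (e^{θ t} - 1) / θ`. Conditionally on `Z` this has probability `e^{-s Z}`, so its
probability is the Laplace transform of `Gamma(1/θ, 1/θ)` at `s`, which is
`(1 + θ s)^{-1/θ} = e^{-t}`.
-/

open MeasureTheory ProbabilityTheory Real Set

lemma gammaMeasure_Iic_zero (a r : ℝ) : gammaMeasure a r (Iic 0) = 0 := by
  rw [gammaMeasure, withDensity_apply _ measurableSet_Iic, setLIntegral_congr Iio_ae_eq_Iic.symm]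
  exact lintegral_gammaPDF_of_nonpos le_rfl

lemma ae_pos_gammaMeasure (a r : ℝ) : ∀ᵐ x ∂gammaMeasure a r, 0 < x := by
  refine ae_iff.2 ?_
  simp only [not_lt]
  exact gammaMeasure_Iic_zero a r

lemma expMeasure_Ioi {r c : ℝ} (hr : 0 < r) (hc : 0 ≤ c) :
    expMeasure r (Ioi c) = ENNReal.ofReal (exp (-(r * c))) := by
  have := isProbabilityMeasure_expMeasure hr
  have hIic : expMeasure r (Iic c) = ENNReal.ofReal (1 - exp (-(r * c))) := by
    rw [← ofReal_measureReal, ← cdf_eq_real, cdf_expMeasure_eq hr, if_pos hc]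
  have hexp_le : exp (-(r * c)) ≤ 1 := exp_le_one_iff.2 (by nlinarith)
  rw [← compl_Iic, prob_compl_eq_one_sub measurableSet_Iic, hIic, ← ENNReal.ofReal_one,
    ← ENNReal.ofReal_sub _ (sub_nonneg.2 hexp_le), sub_sub_cancel]

lemma measurable_gammaPDF (a r : ℝ) : Measurable (gammaPDF a r) :=
  (measurable_gammaPDFReal a r).ennreal_ofReal

lemma gammaPDF_mul_exp_neg_mul {a r s : ℝ} (ha : 0 < a) (hr : 0 < r) (hrs : 0 < r + s) (x : ℝ) :
    gammaPDF a r x * ENNReal.ofReal (exp (-(s * x)))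
      = ENNReal.ofReal ((r / (r + s)) ^ a) * gammaPDF a (r + s) x := by
  rcases lt_or_ge x 0 with hx | hx
  · simp [gammaPDF_of_neg hx]
  rw [gammaPDF_of_nonneg hx, gammaPDF_of_nonneg hx, ← ENNReal.ofReal_mul (by positivity),
    ← ENNReal.ofReal_mul (by positivity)]
  congr 1
  have hr_pow : r ^ a = (r / (r + s)) ^ a * (r + s) ^ a := by
    rw [div_rpow hr.le hrs.le, div_mul_cancel₀ _ (rpow_pos_of_pos hrs a).ne']
  rw [hr_pow, show -((r + s) * x) = -(r * x) + -(s * x) by ring, exp_add]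
  ring

lemma lintegral_exp_neg_mul_gammaMeasure {a r s : ℝ} (ha : 0 < a) (hr : 0 < r)
    (hrs : 0 < r + s) :
    ∫⁻ x, ENNReal.ofReal (exp (-(s * x))) ∂gammaMeasure a r
      = ENNReal.ofReal ((r / (r + s)) ^ a) := by
  rw [gammaMeasure, lintegral_withDensity_eq_lintegral_mul _ (measurable_gammaPDF a r)
    (by fun_prop)]
  simp only [Pi.mul_apply, gammaPDF_mul_exp_neg_mul ha hr hrs]
  rw [lintegral_const_mul _ (measurable_gammaPDF a _),
    lintegral_gammaPDF_eq_one ha hrs, mul_one]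

theorem ProbabilityTheory.IndepFun.measure_preimage_eq_lintegral {Ω α β : Type*}
    [MeasurableSpace Ω] [MeasurableSpace α] [MeasurableSpace β] {μ : Measure Ω} [IsFiniteMeasure μ]
    {X : Ω → α} {Y : Ω → β} (h : IndepFun X Y μ) (hX : Measurable X) (hY : Measurable Y)
    {s : Set (α × β)} (hs : MeasurableSet s) :
    μ {ω | (X ω, Y ω) ∈ s} = ∫⁻ x, μ.map Y (Prod.mk x ⁻¹' s) ∂μ.map X := by
  rw [← Measure.prod_apply hs,
    ← (indepFun_iff_map_prod_eq_prod_map_map hX.aemeasurable hY.aemeasurable).1 h,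
    Measure.map_apply (hX.prodMk hY) hs]
  rfl

lemma measure_mul_lt_of_gammaMeasure_of_expMeasure {Ω : Type*} [MeasurableSpace Ω]
    {μ : Measure Ω} [IsProbabilityMeasure μ] {a r ℓ s : ℝ} (ha : 0 < a) (hr : 0 < r)
    (hℓ : 0 < ℓ) (hs : 0 ≤ s) {Z V : Ω → ℝ} (hZmeas : Measurable Z) (hVmeas : Measurable V)
    (hZ : μ.map Z = gammaMeasure a r) (hV : μ.map V = expMeasure ℓ) (hindep : IndepFun Z V μ) :
    μ {ω | Z ω * s < V ω} = ENNReal.ofReal ((r / (r + ℓ * s)) ^ a) := by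
  have hset : MeasurableSet {p : ℝ × ℝ | p.1 * s < p.2} :=
    measurableSet_lt (measurable_fst.mul_const s) measurable_snd
  rw [← lintegral_exp_neg_mul_gammaMeasure ha hr (by positivity)]
  refine (hindep.measure_preimage_eq_lintegral hZmeas hVmeas hset).trans ?_
  rw [hZ, hV]
  refine lintegral_congr_ae ?_
  filter_upwards [ae_pos_gammaMeasure a r] with z hz
  rw [show Prod.mk z ⁻¹' {p : ℝ × ℝ | p.1 * s < p.2} = Ioi (z * s) from rfl,
    expMeasure_Ioi hℓ (by positivity)]
  ring_nf

theorem measure_lt_frailty_log {Ω : Type*} [MeasurableSpace Ω] {μ : Measure Ω}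
    [IsProbabilityMeasure μ] {θ : ℝ} (hθ : 0 < θ) {Z V : Ω → ℝ} (hZmeas : Measurable Z)
    (hVmeas : Measurable V) (hZ : μ.map Z = gammaMeasure (1 / θ) (1 / θ))
    (hV : μ.map V = expMeasure 1) (hindep : IndepFun Z V μ) {t : ℝ} (ht : 0 ≤ t) :
    μ {ω | t < 1 / θ * log (θ / Z ω * V ω + 1)} = ENNReal.ofReal (exp (-t)) := by
  set s := (exp (θ * t) - 1) / θ
  have hs : 0 ≤ s := div_nonneg (sub_nonneg.2 (one_le_exp (by positivity))) hθ.le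
  have hZpos : ∀ᵐ ω ∂μ, 0 < Z ω :=
    ae_of_ae_map hZmeas.aemeasurable (hZ ▸ ae_pos_gammaMeasure _ _)
  have hVpos : ∀ᵐ ω ∂μ, 0 < V ω :=
    ae_of_ae_map hVmeas.aemeasurable (hV ▸ ae_pos_gammaMeasure _ _)
  have hevent : {ω | t < 1 / θ * log (θ / Z ω * V ω + 1)} =ᵐ[μ] {ω | Z ω * s < V ω} := by
    filter_upwards [hZpos, hVpos] with ω hz hv
    have hX : 0 < θ / Z ω * V ω + 1 := by positivity
    change (t < _) = (_ < _)
    rw [eq_iff_iff, one_div_mul_eq_div, lt_div_iff₀ hθ, mul_comm, lt_log_iff_exp_lt hX,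
      ← sub_lt_iff_lt_add, div_mul_eq_mul_div, lt_div_iff₀ hz, mul_div_assoc', div_lt_iff₀ hθ]
    constructor <;> intro h <;> linarith
  rw [measure_congr hevent, measure_mul_lt_of_gammaMeasure_of_expMeasure (by positivity)
    (by positivity) one_pos hs hZmeas hVmeas hZ hV hindep]
  have hsum : 1 / θ + 1 * s = exp (θ * t) / θ := by
    simp only [s]
    ring
  rw [hsum, div_div_div_cancel_right₀ hθ.ne', one_div, ← exp_neg, ← exp_mul, neg_mul,
    mul_right_comm, mul_one_div_cancel hθ.ne', one_mul]

/-- With `Z ~ Gamma(1/θ, 1/θ)` and `V ~ Exp(1)` independent,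
`T⁰ = (1/θ)log((θ/Z)V + 1)` and `T¹ = (1/(θe^β))log((θ/Z)V + 1)` satisfy
`P(T⁰ > t) = e^{−t}` and `P(T¹ > t) = e^{−e^β t}` for all `t ≥ 0`; in particular the
marginal Cox model holds: `P(T¹ > t) = P(T⁰ > t)^{e^β}`. -/
theorem stmt11 {Ω : Type*} [MeasurableSpace Ω] (μ : Measure Ω) [IsProbabilityMeasure μ]
    (θ β : ℝ) (hθ : 0 < θ)
    (Z V : Ω → ℝ) (hZmeas : Measurable Z) (hVmeas : Measurable V)
    (hZ : Measure.map Z μ = gammaMeasure (1 / θ) (1 / θ))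
    (hV : Measure.map V μ = expMeasure 1)
    (hindep : IndepFun Z V μ)
    (T0 T1 : Ω → ℝ)
    (hT0 : ∀ ω, T0 ω = (1 / θ) * Real.log ((θ / Z ω) * V ω + 1))
    (hT1 : ∀ ω, T1 ω = (1 / (θ * Real.exp β)) * Real.log ((θ / Z ω) * V ω + 1)) :
    ∀ t : ℝ, 0 ≤ t →
      μ {ω | t < T0 ω} = ENNReal.ofReal (Real.exp (-t))
      ∧ μ {ω | t < T1 ω} = ENNReal.ofReal (Real.exp (-(Real.exp β * t)))
      ∧ (μ {ω | t < T1 ω}).toReal = (μ {ω | t < T0 ω}).toReal ^ Real.exp β := by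
  intro t ht
  have hT0_tail : ∀ u, 0 ≤ u → μ {ω | u < T0 ω} = ENNReal.ofReal (exp (-u)) := fun u hu => by
    simp_rw [hT0]
    exact measure_lt_frailty_log hθ hZmeas hVmeas hZ hV hindep hu
  have hT1_event : {ω | t < T1 ω} = {ω | exp β * t < T0 ω} := by
    ext ω
    simp only [mem_ofPred_eq, hT0, hT1, one_div_mul_eq_div]
    rw [lt_div_iff₀ (by positivity), lt_div_iff₀ hθ]
    constructor <;> intro h <;> linarith
  have hT0_t := hT0_tail t ht
  have hT1_t : μ {ω | t < T1 ω} = ENNReal.ofReal (exp (-(exp β * t))) := by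
    rw [hT1_event]
    exact hT0_tail _ (by positivity)
  refine ⟨hT0_t, hT1_t, ?_⟩
  rw [hT0_t, hT1_t, ENNReal.toReal_ofReal (exp_nonneg _), ENNReal.toReal_ofReal (exp_nonneg _),
    ← exp_mul, neg_mul, mul_comm]
end

section
/- Let θ > 0, β ∈ ℝ, and define C(s, u) = (e^{θs} + e^{θ e^β u} − 1)^{−1/θ} for s, u ≥ 0. Then for every t > 0 the partial derivatives of C at (t, t) satisfy ∂_u C(t, t) / ∂_s C(t, t) = e^β exp{tθ(e^β − 1)}. Hence the marginal causal hazard ratio of this data-generating process is HR(t) = e^β exp{tθ(e^β − 1)}; it equals e^β at t = 0, and when β < 0 it is strictly decreasing in t and tends to 0 as t → ∞. -/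
/-!
Both partial derivatives of `C = (e^{θs} + e^{θe^β u} - 1)^{-1/θ}` are the same power of the
common base at `(t, t)` times the derivative of the respective summand, so their ratio is
`θe^β e^{θe^β t} / (θ e^{θt}) = e^β e^{tθ(e^β - 1)}`. For `β < 0` the exponent has negative
slope `θ(e^β - 1)`, which gives monotonicity and the limit.
-/

open Real Filter

noncomputable section

namespace GammaFrailty

def survival (θ β s u : ℝ) : ℝ :=
  (exp (θ * s) + exp (θ * exp β * u) - 1) ^ (-(1 / θ))

def hazardRatio (θ β t : ℝ) : ℝ :=
  exp β * exp (t * θ * (exp β - 1))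

lemma deriv_rpow_div_deriv_rpow {F G : ℝ → ℝ} {a b p t : ℝ} (hF : HasDerivAt F a t)
    (hG : HasDerivAt G b t) (hFG : F t = G t) (hpos : 0 < F t) (hp : p ≠ 0) :
    deriv (fun x => F x ^ p) t / deriv (fun x => G x ^ p) t = a / b := by
  rw [(hF.rpow_const (Or.inl hpos.ne')).deriv,
    (hG.rpow_const (Or.inl (hFG ▸ hpos).ne')).deriv, hFG,
    mul_div_mul_right _ _ (rpow_pos_of_pos (hFG ▸ hpos) _).ne', mul_div_mul_right _ _ hp]

lemma survival_base_pos {θ β t : ℝ} (ht : 0 ≤ θ * t) :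
    0 < exp (θ * t) + exp (θ * exp β * t) - 1 := by
  have := one_le_exp ht
  have := exp_pos (θ * exp β * t)
  linarith

lemma deriv_survival_right_div_deriv_survival_left {θ β t : ℝ} (hθ : 0 < θ) (ht : 0 ≤ t) :
    deriv (fun u => survival θ β t u) t / deriv (fun s => survival θ β s t) t
      = hazardRatio θ β t := by
  have hu : HasDerivAt (fun u => exp (θ * t) + exp (θ * exp β * u) - 1)
      (exp (θ * exp β * t) * (θ * exp β)) t :=
    (((hasDerivAt_id t).const_mul (θ * exp β)).exp.const_add _).sub_const 1 |>.congr_deriv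
      (by simp)
  have hs : HasDerivAt (fun s => exp (θ * s) + exp (θ * exp β * t) - 1)
      (exp (θ * t) * θ) t :=
    (((hasDerivAt_id t).const_mul θ).exp.add_const _).sub_const 1 |>.congr_deriv (by simp)
  unfold survival
  rw [deriv_rpow_div_deriv_rpow hu hs rfl (survival_base_pos (by positivity))
    (by simp [hθ.ne']), hazardRatio, div_eq_iff (by positivity)]
  have hexp : exp (θ * exp β * t) = exp (t * θ * (exp β - 1)) * exp (θ * t) := by
    rw [← exp_add]; ring_nf
  rw [hexp]; ring

lemma hazardRatio_zero (θ β : ℝ) : hazardRatio θ β 0 = exp β := by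
  simp [hazardRatio]

lemma hazardRatio_slope_neg {θ β : ℝ} (hθ : 0 < θ) (hβ : β < 0) : θ * (exp β - 1) < 0 :=
  mul_neg_of_pos_of_neg hθ (by linarith [exp_lt_one_iff.mpr hβ])

lemma strictAnti_hazardRatio {θ β : ℝ} (hθ : 0 < θ) (hβ : β < 0) :
    StrictAnti (hazardRatio θ β) := by
  have hexp : StrictAnti fun t : ℝ => exp (t * (θ * (exp β - 1))) :=
    exp_strictMono.comp_strictAnti fun _ _ h => mul_lt_mul_of_neg_right h (hazardRatio_slope_neg hθ hβ)
  unfold hazardRatio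
  simpa only [mul_assoc] using hexp.const_mul (exp_pos β)

lemma tendsto_hazardRatio_atTop {θ β : ℝ} (hθ : 0 < θ) (hβ : β < 0) :
    Tendsto (hazardRatio θ β) atTop (nhds 0) := by
  have hexp : Tendsto (fun t : ℝ => exp (t * (θ * (exp β - 1)))) atTop (nhds 0) :=
    tendsto_exp_atBot.comp (tendsto_id.atTop_mul_const_of_neg (hazardRatio_slope_neg hθ hβ))
  unfold hazardRatio
  simpa only [mul_assoc, mul_zero] using hexp.const_mul (exp β)

end GammaFrailty

end

open GammaFrailty in
/-- For `C(s,u) = (e^{θs} + e^{θe^β u} − 1)^{−1/θ}`, the partial derivatives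
at `(t,t)` satisfy `∂_u C(t,t)/∂_s C(t,t) = e^β exp{tθ(e^β − 1)}`; hence the marginal
causal hazard ratio is `HR(t) = e^β exp{tθ(e^β − 1)}`, which equals `e^β` at `t = 0`, and
for `β < 0` is strictly decreasing in `t` and tends to `0` as `t → ∞`. -/
theorem stmt13 (θ β : ℝ) (hθ : 0 < θ)
    (C : ℝ → ℝ → ℝ)
    (hC : ∀ s u : ℝ, 0 ≤ s → 0 ≤ u →
      C s u = (Real.exp (θ * s) + Real.exp (θ * Real.exp β * u) - 1) ^ (-(1 / θ))) :
    (∀ t : ℝ, 0 < t →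
      deriv (fun u => C t u) t / deriv (fun s => C s t) t
        = Real.exp β * Real.exp (t * θ * (Real.exp β - 1)))
    ∧ Real.exp β * Real.exp ((0 : ℝ) * θ * (Real.exp β - 1)) = Real.exp β
    ∧ (β < 0 →
        StrictAntiOn (fun t => Real.exp β * Real.exp (t * θ * (Real.exp β - 1)))
          (Set.Ici 0)
        ∧ Tendsto (fun t => Real.exp β * Real.exp (t * θ * (Real.exp β - 1)))
            atTop (nhds 0)) := by
  refine ⟨fun t ht => ?_, hazardRatio_zero θ β, fun hβ =>
    ⟨(strictAnti_hazardRatio hθ hβ).strictAntiOn _, tendsto_hazardRatio_atTop hθ hβ⟩⟩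
  have hCu : (fun u => C t u) =ᶠ[nhds t] fun u => survival θ β t u :=
    (eventually_gt_nhds ht).mono fun u hu => hC t u ht.le hu.le
  have hCs : (fun s => C s t) =ᶠ[nhds t] fun s => survival θ β s t :=
    (eventually_gt_nhds ht).mono fun s hs => hC s t hs.le ht.le
  rw [hCu.deriv_eq, hCs.deriv_eq]
  exact deriv_survival_right_div_deriv_survival_left hθ ht.le
end

section
/- Let Z be a random variable with values in a measurable space, ψ : [0, ∞) → ℝ and ω : [0, ∞) × range(Z) → [0, ∞) measurable, and define the joint survival function J(s, u) = E[exp(−∫₀ˢ ω(r, Z) dr − ∫₀ᵘ (ψ(r) + ω(r, Z)) dr)]. Fix t > 0 and assume J is partially differentiable at (t, t) with differentiation under the expectation valid and J(t, t) > 0. Then the principal-stratum hazard difference equals ψ(t): (−∂_u J(t, t))/J(t, t) − (−∂_s J(t, t))/J(t, t) = ψ(t). Equivalently, lim_{h→0} h⁻¹[P(t ≤ T¹ < t+h | T⁰ ≥ t, T¹ ≥ t) − P(t ≤ T⁰ < t+h | T⁰ ≥ t, T¹ ≥ t)] = ψ(t) when T⁰, T¹ are conditionally independent given Z with conditional hazards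 ω(t, Z) and ψ(t) + ω(t, Z). -/
open MeasureTheory ProbabilityTheory Real

/-! Differentiating `exp(−∫₀ˢ ω − ∫₀ᵘ (ψ + ω))` in `u` instead of `s` only adds the factor
`−ψ(t)`, which does not depend on `Z`; by linearity of the expectation `∂_u J = −ψ(t) J + ∂_s J`
at `(t, t)`, so the two stratum hazards differ by exactly `ψ(t)`. -/

theorem integral_neg_add_mul_eq {Ω : Type*} [MeasurableSpace Ω] {μ : Measure Ω}
    {E f : Ω → ℝ} (c : ℝ) (hE : Integrable E μ) (hfE : Integrable (fun x => f x * E x) μ) :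
    ∫ x, -(c + f x) * E x ∂μ = -c * ∫ x, E x ∂μ + ∫ x, -f x * E x ∂μ := by
  have hsplit : ∀ x, -(c + f x) * E x = -c * E x + -(f x * E x) := fun x => by ring
  simp only [hsplit, neg_mul]
  rw [integral_add (f := fun x => -(c * E x)) (g := fun x => -(f x * E x))
    (hE.const_mul c).neg hfE.neg, integral_neg, integral_neg, integral_const_mul]

theorem div_sub_div_eq_of_eq_neg_mul_add {J Ds Du c : ℝ} (hJ : J ≠ 0) (h : Du = -c * J + Ds) :
    (-Du) / J - (-Ds) / J = c := by
  rw [h]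
  field_simp
  ring

theorem stmt18_general {Ω α : Type*} [MeasurableSpace Ω]
    (μ : Measure Ω)
    (Z : Ω → α)
    (ψ : ℝ → ℝ) (w : ℝ → α → ℝ)
    (J : ℝ → ℝ → ℝ)
    (hJ : ∀ s u : ℝ, J s u = ∫ x, Real.exp (-(∫ r in (0:ℝ)..s, w r (Z x))
      - (∫ r in (0:ℝ)..u, (ψ r + w r (Z x)))) ∂μ)
    (t : ℝ) (hJpos : 0 < J t t)
    (Ds Du : ℝ)
    -- differentiation under the expectation is valid:
    (hDs' : Ds = ∫ x, (-(w t (Z x))) * Real.exp (-(∫ r in (0:ℝ)..t, w r (Z x))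
      - (∫ r in (0:ℝ)..t, (ψ r + w r (Z x)))) ∂μ)
    (hDu' : Du = ∫ x, (-(ψ t + w t (Z x))) * Real.exp (-(∫ r in (0:ℝ)..t, w r (Z x))
      - (∫ r in (0:ℝ)..t, (ψ r + w r (Z x)))) ∂μ)
    (hint : Integrable (fun x => Real.exp (-(∫ r in (0:ℝ)..t, w r (Z x))
      - (∫ r in (0:ℝ)..t, (ψ r + w r (Z x))))) μ)
    (hint' : Integrable (fun x => w t (Z x) * Real.exp (-(∫ r in (0:ℝ)..t, w r (Z x))
      - (∫ r in (0:ℝ)..t, (ψ r + w r (Z x))))) μ) :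
    (-Du) / J t t - (-Ds) / J t t = ψ t := by
  refine div_sub_div_eq_of_eq_neg_mul_add hJpos.ne' ?_
  rw [hDu', integral_neg_add_mul_eq (ψ t) hint hint', hJ, hDs']

/-- Appendix A.5: Under the additive hazards model with conditional
hazards `ω(t,Z)` (control) and `ψ(t) + ω(t,Z)` (treated) and conditional independence of
`T⁰, T¹` given `Z`, the joint survival is
`J(s,u) = E[exp(−∫₀ˢ ω(r,Z)dr − ∫₀ᵘ (ψ(r)+ω(r,Z))dr)]`; if `J` is partially
differentiable at `(t,t)` with differentiation under the expectation valid and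
`J(t,t) > 0`, then the principal-stratum hazard difference equals `ψ(t)`:
`(−∂_u J(t,t))/J(t,t) − (−∂_s J(t,t))/J(t,t) = ψ(t)`. -/
theorem stmt18 {Ω α : Type*} [MeasurableSpace Ω] [MeasurableSpace α]
    (μ : Measure Ω) [IsProbabilityMeasure μ]
    (Z : Ω → α) (hZ : Measurable Z)
    (ψ : ℝ → ℝ) (w : ℝ → α → ℝ)
    (hψ : Measurable ψ) (hw : ∀ s, Measurable (w s))
    (hwnonneg : ∀ s z, 0 ≤ w s z)
    (J : ℝ → ℝ → ℝ)
    (hJ : ∀ s u : ℝ, J s u = ∫ x, Real.exp (-(∫ r in (0:ℝ)..s, w r (Z x))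
      - (∫ r in (0:ℝ)..u, (ψ r + w r (Z x)))) ∂μ)
    (t : ℝ) (ht : 0 < t) (hJpos : 0 < J t t)
    (Ds Du : ℝ)
    (hDs : HasDerivAt (fun s => J s t) Ds t)
    (hDu : HasDerivAt (fun u => J t u) Du t)
    -- differentiation under the expectation is valid:
    (hDs' : Ds = ∫ x, (-(w t (Z x))) * Real.exp (-(∫ r in (0:ℝ)..t, w r (Z x))
      - (∫ r in (0:ℝ)..t, (ψ r + w r (Z x)))) ∂μ)
    (hDu' : Du = ∫ x, (-(ψ t + w t (Z x))) * Real.exp (-(∫ r in (0:ℝ)..t, w r (Z x))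
      - (∫ r in (0:ℝ)..t, (ψ r + w r (Z x)))) ∂μ)
    (hint : Integrable (fun x => Real.exp (-(∫ r in (0:ℝ)..t, w r (Z x))
      - (∫ r in (0:ℝ)..t, (ψ r + w r (Z x))))) μ)
    (hint' : Integrable (fun x => w t (Z x) * Real.exp (-(∫ r in (0:ℝ)..t, w r (Z x))
      - (∫ r in (0:ℝ)..t, (ψ r + w r (Z x))))) μ) :
    (-Du) / J t t - (-Ds) / J t t = ψ t :=
  stmt18_general μ Z ψ w J hJ t hJpos Ds Du hDs' hDu' hint hint'
end
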